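/- Let L be a Moufang loop containing a group T generated by a set S of elements and an element u such that ((g₁g₂)u)² = 1 for all g₁,g₂ ∈ S ∪ {e}. Then the Chein relations (c1) g₁(g₂u)=(g₂g₁)u, (c2) (g₁u)g₂=(g₁g₂⁻¹)u, (c3) (g₁u)(g₂u)=g₂⁻¹g₁ hold for ALL g₁,g₂ ∈ T. -/

import Mathlib

/-!
Say that `u` inverts `g` when `gu = ug⁻¹`; since `u² = 1` (take `g₁ = g₂ = 1`), this is
equivalent to `(gu)² = 1`, and the three Chein relations for `g₁, g₂ ∈ T` follow from the
Moufang identities once `u` inverts `g₁`, `g₂`, `g₂g₁` and `g₁⁻¹g₂`. So it suffices that `u`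
inverts every element of `T`. By hypothesis `u` inverts every product of two elements of
`S ∪ {1}`; a Moufang identity transfers this to products of two elements of `S ∪ S⁻¹ ∪ {1}`,
and then to all words in `S ∪ S⁻¹` by induction on their length: if `a, b, c ∈ T` and `u`
inverts `a, b, c, ab⁻¹, ac, bc`, then evaluating `((au)b)(c(au)) = (au)((bc)(au))` with the
Chein relations already available shows that `u` inverts `a(bc)`.
-/
/-- A Moufang loop: a loop (a quasigroup with two-sided identity) satisfying the
Moufang identities (m1) `z(x(yx)) = ((zx)y)x`, (m2) `x(y(xz)) = ((xy)x)z`,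
(m3) `(xy)(zx) = x((yz)x)`. -/
class MoufangLoop (L : Type*) extends Mul L, One L where
  one_mul : ∀ a : L, 1 * a = a
  mul_one : ∀ a : L, a * 1 = a
  left_bij : ∀ a : L, Function.Bijective fun x : L => a * x
  right_bij : ∀ a : L, Function.Bijective fun x : L => x * a
  m1 : ∀ x y z : L, z * (x * (y * x)) = ((z * x) * y) * x
  m2 : ∀ x y z : L, x * (y * (x * z)) = ((x * y) * x) * z
  m3 : ∀ x y z : L, (x * y) * (z * x) = x * ((y * z) * x)

/-- The subset `T` of the Moufang loop `L`, together with the inversion map `inv`,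
forms a subgroup of `L`: it contains the identity, is closed under multiplication
and inversion, multiplication restricted to `T` is associative, and `inv` provides
two-sided inverses in `T`. -/
structure IsSubgroupOfLoop {L : Type*} [MoufangLoop L] (T : Set L) (inv : L → L) : Prop where
  one_mem : (1 : L) ∈ T
  mul_mem : ∀ a ∈ T, ∀ b ∈ T, a * b ∈ T
  inv_mem : ∀ a ∈ T, inv a ∈ T
  assoc : ∀ a ∈ T, ∀ b ∈ T, ∀ c ∈ T, (a * b) * c = a * (b * c)
  mul_inv : ∀ a ∈ T, a * inv a = 1
  inv_mul : ∀ a ∈ T, inv a * a = 1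

/-- `T` is generated (as a group) by the subset `S`: every element of `T` is an
iterated product of elements of `S` and their inverses. -/
def GeneratedBy {L : Type*} [MoufangLoop L] (T : Set L) (inv : L → L) (S : Set L) : Prop :=
  S ⊆ T ∧ ∀ w ∈ T, ∃ l : List L,
    (∀ x ∈ l, x ∈ S ∨ ∃ s ∈ S, x = inv s) ∧ w = l.foldr (· * ·) 1

namespace MoufangLoop

open scoped Pointwise

variable {L : Type*} [MoufangLoop L]

theorem mul_left_cancel {a b c : L} (h : a * b = a * c) : b = c := (left_bij a).1 h

theorem mul_right_cancel {a b c : L} (h : b * a = c * a) : b = c := (right_bij a).1 h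

noncomputable instance : Inv L := ⟨fun a => Function.surjInv (right_bij a).2 1⟩

theorem inv_mul_cancel (a : L) : a⁻¹ * a = 1 := Function.surjInv_eq (right_bij a).2 1

theorem mul_inv_cancel_left (a b : L) : a * (a⁻¹ * b) = b := by
  have h := m2 a⁻¹ a b
  rw [inv_mul_cancel, one_mul] at h
  exact mul_left_cancel h

theorem mul_inv_cancel (a : L) : a * a⁻¹ = 1 := by
  simpa only [mul_one] using mul_inv_cancel_left a 1

theorem inv_inv (a : L) : a⁻¹⁻¹ = a :=
  mul_right_cancel (a := a⁻¹) (by rw [inv_mul_cancel, mul_inv_cancel])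

theorem inv_mul_cancel_left (a b : L) : a⁻¹ * (a * b) = b := by
  simpa only [inv_inv] using mul_inv_cancel_left a⁻¹ b

theorem mul_inv_cancel_right (a b : L) : a * b * b⁻¹ = a := by
  have h := m1 b b⁻¹ a
  rw [inv_mul_cancel, mul_one] at h
  exact (mul_right_cancel h).symm

theorem inv_mul_cancel_right (a b : L) : a * b⁻¹ * b = a := by
  simpa only [inv_inv] using mul_inv_cancel_right a b⁻¹

theorem inv_eq_of_mul_eq_one_right {a b : L} (h : a * b = 1) : a⁻¹ = b :=
  mul_left_cancel (by rw [h, mul_inv_cancel])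

theorem mul_inv_rev (a b : L) : (a * b)⁻¹ = b⁻¹ * a⁻¹ := by
  have h : (a * b)⁻¹ * a = b⁻¹ := by
    simpa only [mul_inv_cancel_right] using inv_mul_cancel_left (a * b) b⁻¹
  rw [← h, mul_inv_cancel_right]

theorem mul_mul_self (a b : L) : a * b * b = a * (b * b) := by
  simpa only [one_mul, mul_one] using (m1 b 1 a).symm

theorem flexible (a b : L) : a * (b * a) = a * b * a := by
  simpa only [one_mul] using m1 a b 1

variable {u : L}

def Inverts (u g : L) : Prop := g * u = u * g⁻¹

theorem inv_eq_self_of_mul_self (hu : u * u = 1) : u⁻¹ = u := inv_eq_of_mul_eq_one_right hu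

theorem mul_mul_cancel_of_mul_self (hu : u * u = 1) (a : L) : u * (u * a) = a := by
  simpa only [inv_eq_self_of_mul_self hu] using mul_inv_cancel_left u a

theorem inverts_iff_conj_eq_inv (hu : u * u = 1) {g : L} :
    Inverts u g ↔ u * (g * u) = g⁻¹ := by
  constructor
  · intro h
    rw [h, mul_mul_cancel_of_mul_self hu]
  · intro h
    rw [Inverts, ← h, mul_mul_cancel_of_mul_self hu]

theorem inverts_iff_mul_self_eq_one (hu : u * u = 1) {g : L} :
    Inverts u g ↔ g * u * (g * u) = 1 := by
  constructor
  · intro h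
    nth_rewrite 1 [h]
    rw [m3, inv_mul_cancel, one_mul, hu]
  · intro h
    have h' := inv_eq_of_mul_eq_one_right h
    rwa [mul_inv_rev, inv_eq_self_of_mul_self hu, eq_comm] at h'

theorem Inverts.mul_eq_inv_mul {g : L} (h : Inverts u g) : u * g = g⁻¹ * u := by
  have hg : g * (u * g) = u := by rw [flexible, h, inv_mul_cancel_right]
  simpa only [hg] using (inv_mul_cancel_left g (u * g)).symm

theorem Inverts.inv {g : L} (h : Inverts u g) : Inverts u g⁻¹ := by
  rw [Inverts, inv_inv, h.mul_eq_inv_mul]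

theorem chein_c2 (hu : u * u = 1) (g₁ : L) {g₂ : L} (h₂ : Inverts u g₂) :
    g₁ * u * g₂ = g₁ * g₂⁻¹ * u := by
  have h := m1 u g₂ g₁
  rw [(inverts_iff_conj_eq_inv hu).1 h₂] at h
  rw [h, mul_mul_self, hu, mul_one]

theorem conj_mul_mul (hu : u * u = 1) {g₁ g₂ : L} (h₁ : Inverts u g₁) (h₂ : Inverts u g₂) :
    u * (g₁ * (g₂ * u)) = g₁⁻¹ * g₂⁻¹ := by
  rw [h₂, m2, h₁.mul_eq_inv_mul, mul_mul_self, hu, mul_one]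

theorem chein_c1_iff (hu : u * u = 1) {g₁ g₂ : L} (h₁ : Inverts u g₁) (h₂ : Inverts u g₂) :
    g₁ * (g₂ * u) = g₂ * g₁ * u ↔ Inverts u (g₂ * g₁) := by
  rw [inverts_iff_conj_eq_inv hu, mul_inv_rev, ← conj_mul_mul hu h₁ h₂]
  exact ⟨fun h => by rw [h], fun h => mul_left_cancel h.symm⟩

theorem chein_c3 (hu : u * u = 1) {g₁ g₂ : L} (h₁ : Inverts u g₁)
    (h₁₂ : Inverts u (g₁⁻¹ * g₂)) : g₁ * u * (g₂ * u) = g₂⁻¹ * g₁ := by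
  rw [h₁, m3, (inverts_iff_conj_eq_inv hu).1 h₁₂, mul_inv_rev, inv_inv]

theorem Inverts.mul_inv (hu : u * u = 1) {a b : L} (ha : Inverts u a)
    (hab : Inverts u (a * b)) : Inverts u (a * b⁻¹) := by
  have hba : Inverts u (b⁻¹ * a⁻¹) := by simpa only [mul_inv_rev] using hab.inv
  have hz : u * (b⁻¹ * u * a) = a * b := by
    rw [chein_c2 hu _ ha, (inverts_iff_conj_eq_inv hu).1 hba, mul_inv_rev, inv_inv, inv_inv]
  have hm := m3 a⁻¹ u (b⁻¹ * u * a)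
  rw [mul_inv_cancel_right, hz, flexible, inv_mul_cancel_left, ← ha.mul_eq_inv_mul, m3] at hm
  rw [inverts_iff_conj_eq_inv hu, hm, mul_inv_rev, inv_inv]

theorem inverts_mul_of_mem_union_inv (hu : u * u = 1) {G : Set L} (hG1 : (1 : L) ∈ G)
    (hG : ∀ x ∈ G, ∀ y ∈ G, Inverts u (x * y)) :
    ∀ x ∈ G ∪ G⁻¹, ∀ y ∈ G ∪ G⁻¹, Inverts u (x * y) := by
  have hGu : ∀ a ∈ G, Inverts u a := fun a ha => by simpa only [mul_one] using hG a ha 1 hG1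
  have hinv : ∀ a ∈ G, ∀ b ∈ G,
      Inverts u (a * b⁻¹) ∧ Inverts u (a⁻¹ * b) ∧ Inverts u (a⁻¹ * b⁻¹) := by
    intro a ha b hb
    have hab : Inverts u (a⁻¹ * b⁻¹) := by simpa only [mul_inv_rev] using (hG b hb a ha).inv
    refine ⟨(hGu a ha).mul_inv hu (hG a ha b hb), ?_, hab⟩
    simpa only [inv_inv] using (hGu a ha).inv.mul_inv hu hab
  rintro x (hx | hx) y (hy | hy)
  · exact hG x hx y hy
  · simpa only [inv_inv] using (hinv x hx _ (Set.mem_inv.1 hy)).1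
  · simpa only [inv_inv] using (hinv _ (Set.mem_inv.1 hx) y hy).2.1
  · simpa only [inv_inv] using (hinv _ (Set.mem_inv.1 hx) _ (Set.mem_inv.1 hy)).2.2

variable {T : Set L} {inv : L → L}

theorem _root_.IsSubgroupOfLoop.inv_eq (hT : IsSubgroupOfLoop T inv) {a : L} (ha : a ∈ T) :
    inv a = a⁻¹ :=
  (inv_eq_of_mul_eq_one_right (hT.mul_inv a ha)).symm

theorem _root_.IsSubgroupOfLoop.loop_inv_mem (hT : IsSubgroupOfLoop T inv) {a : L}
    (ha : a ∈ T) : a⁻¹ ∈ T :=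
  hT.inv_eq ha ▸ hT.inv_mem a ha

theorem _root_.IsSubgroupOfLoop.list_prod_mem (hT : IsSubgroupOfLoop T inv) {l : List L}
    (hl : ∀ x ∈ l, x ∈ T) : l.prod ∈ T := by
  induction l with
  | nil => exact hT.one_mem
  | cons x l ih =>
    exact hT.mul_mem x (hl x List.mem_cons_self) _
      (ih fun y hy => hl y (List.mem_cons_of_mem x hy))

theorem inverts_mul_mul (hT : IsSubgroupOfLoop T inv) (hu : u * u = 1) {a b c : L}
    (haT : a ∈ T) (hbT : b ∈ T) (hcT : c ∈ T) (ha : Inverts u a) (hb : Inverts u b)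
    (hc : Inverts u c) (hab : Inverts u (a * b⁻¹)) (hac : Inverts u (a * c))
    (hbc : Inverts u (b * c)) : Inverts u (a * (b * c)) := by
  have hbc' : Inverts u ((a * b⁻¹)⁻¹ * (a * c)) := by
    rwa [mul_inv_rev, inv_inv, hT.assoc b hbT _ (hT.loop_inv_mem haT) _ (hT.mul_mem a haT c hcT),
      inv_mul_cancel_left]
  have hcb : (a * c)⁻¹ * (a * b⁻¹) = c⁻¹ * b⁻¹ := by
    rw [mul_inv_rev, hT.assoc _ (hT.loop_inv_mem hcT) _ (hT.loop_inv_mem haT) _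
      (hT.mul_mem a haT _ (hT.loop_inv_mem hbT)), inv_mul_cancel_left]
  -- Evaluate both sides of the Moufang identity `((au)b)(c(au)) = (au)((bc)(au))`;
  -- since `(au)² = 1`, this solves for `(bc)(au)`.
  have hm := m3 (a * u) b c
  rw [chein_c2 hu a hb, (chein_c1_iff hu hc ha).2 hac, chein_c3 hu hab hbc', hcb] at hm
  have hau : a * u * (a * u) = 1 := (inverts_iff_mul_self_eq_one hu).1 ha
  have hcb_inv : Inverts u (c⁻¹ * b⁻¹) := by simpa only [mul_inv_rev] using hbc.inv
  refine (chein_c1_iff hu hbc ha).1 ?_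
  rw [← mul_mul_cancel_of_mul_self hau (b * c * (a * u)), ← hm, chein_c2 hu a hcb_inv,
    mul_inv_rev, inv_inv, inv_inv]

theorem inverts_mul_list_prod (hT : IsSubgroupOfLoop T inv) (hu : u * u = 1) {X : Set L}
    (hXT : X ⊆ T) (hX1 : (1 : L) ∈ X) (hXinv : ∀ x ∈ X, x⁻¹ ∈ X)
    (hX : ∀ x ∈ X, ∀ y ∈ X, Inverts u (x * y)) {l : List L} (hl : ∀ z ∈ l, z ∈ X) :
    ∀ x ∈ X, Inverts u (x * l.prod) := by
  have hXu : ∀ x ∈ X, Inverts u x := fun x hx => by simpa only [mul_one] using hX x hx 1 hX1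
  induction l with
  | nil => simpa only [List.prod_nil, mul_one] using hXu
  | cons z l ih =>
    intro x hx
    have hz := hl z List.mem_cons_self
    have ih := ih fun y hy => hl y (List.mem_cons_of_mem z hy)
    have hlT : l.prod ∈ T := hT.list_prod_mem fun y hy => hXT (hl y (List.mem_cons_of_mem z hy))
    rw [List.prod_cons]
    exact inverts_mul_mul hT hu (hXT hx) (hXT hz) hlT (hXu x hx) (hXu z hz)
      (by simpa only [one_mul] using ih 1 hX1) (hX x hx _ (hXinv z hz)) (ih x hx) (ih z hz)

theorem inverts_of_generatedBy {S : Set L} (hT : IsSubgroupOfLoop T inv)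
    (hgen : GeneratedBy T inv S) (hu : u * u = 1)
    (hS : ∀ x ∈ insert 1 S, ∀ y ∈ insert 1 S, Inverts u (x * y)) {g : L} (hg : g ∈ T) :
    Inverts u g := by
  set G : Set L := insert 1 S
  have hG1 : (1 : L) ∈ G := Set.mem_insert 1 S
  have hGT : G ⊆ T := Set.insert_subset hT.one_mem hgen.1
  have hXT : G ∪ G⁻¹ ⊆ T := Set.union_subset hGT fun x hx => by
    simpa only [inv_inv] using hT.loop_inv_mem (hGT (Set.mem_inv.1 hx))
  have hXinv : ∀ x ∈ G ∪ G⁻¹, x⁻¹ ∈ G ∪ G⁻¹ := by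
    rintro x (hx | hx)
    · exact Or.inr (Set.mem_inv.2 (by rwa [inv_inv]))
    · exact Or.inl hx
  obtain ⟨l, hl, rfl⟩ := hgen.2 g hg
  have hlX : ∀ z ∈ l, z ∈ G ∪ G⁻¹ := by
    intro z hz
    rcases hl z hz with hs | ⟨s, hs, rfl⟩
    · exact Or.inl (Set.mem_insert_of_mem 1 hs)
    · rw [hT.inv_eq (hgen.1 hs)]
      exact Or.inr (Set.mem_inv.2 (by rw [inv_inv]; exact Set.mem_insert_of_mem 1 hs))
  change Inverts u l.prod
  simpa only [one_mul] using inverts_mul_list_prod hT hu hXT (Or.inl hG1) hXinv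
    (inverts_mul_of_mem_union_inv hu hG1 hS) hlX 1 (Or.inl hG1)

end MoufangLoop

/-- Theorem 2.1: let `L` be a Moufang loop containing a group `T` generated by a set
`S`, and `u ∈ L` with `((g₁g₂)u)² = 1` for all `g₁, g₂ ∈ S ∪ {e}`. Then the Chein
relations (c1) `g₁(g₂u) = (g₂g₁)u`, (c2) `(g₁u)g₂ = (g₁g₂⁻¹)u`, and
(c3) `(g₁u)(g₂u) = g₂⁻¹g₁` hold for all `g₁, g₂ ∈ T`. -/
theorem chein_relations_all {L : Type*} [MoufangLoop L]
    (T : Set L) (inv : L → L) (S : Set L) (u : L)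
    (hT : IsSubgroupOfLoop T inv) (hgen : GeneratedBy T inv S)
    (hu : ∀ g₁ ∈ insert (1 : L) S, ∀ g₂ ∈ insert (1 : L) S,
      ((g₁ * g₂) * u) * ((g₁ * g₂) * u) = 1) :
    ∀ g₁ ∈ T, ∀ g₂ ∈ T,
      g₁ * (g₂ * u) = (g₂ * g₁) * u ∧
      (g₁ * u) * g₂ = (g₁ * inv g₂) * u ∧
      (g₁ * u) * (g₂ * u) = inv g₂ * g₁ := by
  have hu₂ : u * u = 1 := by
    simpa only [MoufangLoop.one_mul] using hu 1 (Set.mem_insert 1 S) 1 (Set.mem_insert 1 S)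
  have hT_inverts : ∀ g ∈ T, MoufangLoop.Inverts u g := fun g hg =>
    MoufangLoop.inverts_of_generatedBy hT hgen hu₂
      (fun x hx y hy => (MoufangLoop.inverts_iff_mul_self_eq_one hu₂).2 (hu x hx y hy)) hg
  intro g₁ hg₁ g₂ hg₂
  rw [hT.inv_eq hg₂]
  refine ⟨?_, MoufangLoop.chein_c2 hu₂ g₁ (hT_inverts g₂ hg₂), ?_⟩
  · exact (MoufangLoop.chein_c1_iff hu₂ (hT_inverts g₁ hg₁) (hT_inverts g₂ hg₂)).2
      (hT_inverts _ (hT.mul_mem g₂ hg₂ g₁ hg₁))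
  · exact MoufangLoop.chein_c3 hu₂ (hT_inverts g₁ hg₁)
      (hT_inverts _ (hT.mul_mem _ (hT.loop_inv_mem hg₁) g₂ hg₂))
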